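/- Let n ≥ 5 and define Ψ : ℝ^{2n+1} → ℝ^{n+4} by adjoining to the four constraints of Q (angles summing to 2π, fixed area, vanishing barycenter) the n equilaterality equations rᵢ² + r_{i+1}² − 2rᵢr_{i+1} cos xᵢ − s = 0 (indices mod n), with extra variable s. At (x*, r*, s*) = (2π/n, …, 2π/n, 1, …, 1, 2sin(π/n))… the kernel of DΨ has dimension n − 3; hence Ψ⁻¹(0) is locally an (n−3)-dimensional submanifold near the regular n-gon. -/

import Mathlib

open Real Finset

/-- The constraint map cutting out the equilateral polygons of fixed area inside the
polygonal manifold: angles sum to `2π`, all squared side lengths equal the common value `s`,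
the area is that of the regular `n`-gon inscribed in the unit circle, and the barycenter
of the vertices is the origin.  The codomain `ℝ × (Fin n → ℝ) × ℝ × ℝ × ℝ` has dimension
`n + 4`. -/
noncomputable def PsiMap (n : ℕ) [NeZero n] (p : (Fin n → ℝ) × (Fin n → ℝ) × ℝ) :
    ℝ × (Fin n → ℝ) × ℝ × ℝ × ℝ :=
  let x := p.1
  let r := p.2.1
  let s := p.2.2
  (∑ i, x i - 2 * π,
   fun i => r i ^ 2 + r (i + 1) ^ 2 - 2 * r i * r (i + 1) * Real.cos (x i) - s,
   ∑ i, r i * r (i + 1) * Real.sin (x i) - n * Real.sin (2 * π / n),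
   ∑ i, r i * Real.cos (∑ k ∈ Finset.univ.filter (fun k : Fin n => (k : ℕ) < (i : ℕ)), x k),
   ∑ i, r i * Real.sin (∑ k ∈ Finset.univ.filter (fun k : Fin n => (k : ℕ) < (i : ℕ)), x k))

/-! ### Auxiliary trigonometric sum lemmas -/

lemma PK_exp_sum_aux (n k : ℕ) (h0 : 0 < k) (hk : k < n) :
    (∑ i ∈ range n, Complex.exp ((((i : ℝ) * (k * (2 * π / n)) : ℝ) : ℂ) * Complex.I)) = 0 := by
  have hn : (0:ℝ) < n := by exact_mod_cast Nat.zero_lt_of_lt hk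
  have hpi := Real.pi_pos
  set θ : ℝ := k * (2 * π / n) with hθ
  have hθpos : 0 < θ := by positivity
  have hθlt : θ < 2 * π := by
    have hkn : (k:ℝ) < n := by exact_mod_cast hk
    have : θ = 2 * π * k / n := by rw [hθ]; ring
    rw [this, div_lt_iff₀ hn]
    nlinarith
  set z : ℂ := Complex.exp ((θ : ℂ) * Complex.I) with hz
  have hz1 : z ≠ 1 := by
    rw [hz, Ne, Complex.exp_eq_one_iff]
    rintro ⟨m, hm⟩
    have hm' : ((θ : ℂ)) * Complex.I = ((m * (2 * π) : ℝ) : ℂ) * Complex.I := by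
      rw [hm]; push_cast; ring
    have hI : (θ : ℂ) = ((m * (2 * π) : ℝ) : ℂ) :=
      mul_right_cancel₀ Complex.I_ne_zero hm'
    have hR : θ = m * (2 * π) := by exact_mod_cast hI
    rcases lt_trichotomy (m : ℝ) 0 with hm2 | hm2 | hm2
    · nlinarith
    · rw [hm2] at hR; simp at hR; linarith
    · have h1 : (1:ℝ) ≤ m := by
        have : (0:ℤ) < m := by exact_mod_cast hm2
        exact_mod_cast this
      nlinarith
  have hzn : z ^ n = 1 := by
    rw [hz, ← Complex.exp_nat_mul, Complex.exp_eq_one_iff]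
    refine ⟨k, ?_⟩
    have hn0 : (n:ℂ) ≠ 0 := by exact_mod_cast hn.ne'
    rw [hθ]
    push_cast
    field_simp
  have hsum : ∑ i ∈ range n, z ^ i = 0 := by
    rw [geom_sum_eq hz1, hzn]; simp
  rw [← hsum]
  refine Finset.sum_congr rfl fun i _ => ?_
  rw [hz, ← Complex.exp_nat_mul]
  congr 1
  push_cast
  ring

lemma PK_sum_cos_aux (n k : ℕ) (h0 : 0 < k) (hk : k < n) :
    ∑ i ∈ range n, Real.cos ((i : ℝ) * (k * (2 * π / n))) = 0 := by
  have h := congrArg Complex.re (PK_exp_sum_aux n k h0 hk)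
  rw [Complex.re_sum] at h
  simp only [Complex.exp_ofReal_mul_I_re] at h
  simpa using h

lemma PK_sum_sin_aux (n k : ℕ) (h0 : 0 < k) (hk : k < n) :
    ∑ i ∈ range n, Real.sin ((i : ℝ) * (k * (2 * π / n))) = 0 := by
  have h := congrArg Complex.im (PK_exp_sum_aux n k h0 hk)
  rw [Complex.im_sum] at h
  simp only [Complex.exp_ofReal_mul_I_im] at h
  simpa using h

lemma PK_sum_cos (n : ℕ) (hn : 5 ≤ n) :
    ∑ i : Fin n, Real.cos ((i : ℕ) * (2 * π / n)) = 0 := by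
  rw [Fin.sum_univ_eq_sum_range (fun m : ℕ => Real.cos ((m : ℝ) * (2 * π / n)))]
  have h := PK_sum_cos_aux n 1 one_pos (by omega)
  simpa using h

lemma PK_sum_sin (n : ℕ) (hn : 5 ≤ n) :
    ∑ i : Fin n, Real.sin ((i : ℕ) * (2 * π / n)) = 0 := by
  rw [Fin.sum_univ_eq_sum_range (fun m : ℕ => Real.sin ((m : ℝ) * (2 * π / n)))]
  have h := PK_sum_sin_aux n 1 one_pos (by omega)
  simpa using h

lemma PK_sum_cos_sq (n : ℕ) (hn : 5 ≤ n) :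
    ∑ i : Fin n, Real.cos ((i : ℕ) * (2 * π / n)) ^ 2 = n / 2 := by
  have h2 : ∑ i : Fin n, Real.cos ((i : ℕ) * (2 * (2 * π / n))) = 0 := by
    rw [Fin.sum_univ_eq_sum_range (fun m : ℕ => Real.cos ((m : ℝ) * (2 * (2 * π / n))))]
    have h := PK_sum_cos_aux n 2 two_pos (by omega)
    have : ∀ m : ℕ, (m : ℝ) * (2 * (2 * π / n)) = (m : ℝ) * ((2:ℕ) * (2 * π / n)) := by
      intro m; push_cast; ring
    simp only [this]
    exact h
  have hterm : ∀ i : Fin n, Real.cos ((i : ℕ) * (2 * π / n)) ^ 2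
      = 1 / 2 + Real.cos ((i : ℕ) * (2 * (2 * π / n))) / 2 := by
    intro i
    rw [Real.cos_sq]
    congr 2
    ring
  rw [Finset.sum_congr rfl fun i _ => hterm i, Finset.sum_add_distrib]
  rw [Finset.sum_const, Finset.card_univ, Fintype.card_fin, ← Finset.sum_div, h2]
  simp [nsmul_eq_mul]
  ring

lemma PK_sum_sin_sq (n : ℕ) (hn : 5 ≤ n) :
    ∑ i : Fin n, Real.sin ((i : ℕ) * (2 * π / n)) ^ 2 = n / 2 := by
  have hterm : ∀ i : Fin n, Real.sin ((i : ℕ) * (2 * π / n)) ^ 2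
      = 1 - Real.cos ((i : ℕ) * (2 * π / n)) ^ 2 := by
    intro i
    have := Real.sin_sq_add_cos_sq ((i : ℕ) * (2 * π / n))
    linarith
  rw [Finset.sum_congr rfl fun i _ => hterm i, Finset.sum_sub_distrib,
    PK_sum_cos_sq n hn, Finset.sum_const, Finset.card_univ, Fintype.card_fin]
  simp [nsmul_eq_mul]
  ring

lemma PK_sum_sin_cos (n : ℕ) (hn : 5 ≤ n) :
    ∑ i : Fin n, Real.sin ((i : ℕ) * (2 * π / n)) * Real.cos ((i : ℕ) * (2 * π / n)) = 0 := by
  have h2 : ∑ i : Fin n, Real.sin ((i : ℕ) * (2 * (2 * π / n))) = 0 := by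
    rw [Fin.sum_univ_eq_sum_range (fun m : ℕ => Real.sin ((m : ℝ) * (2 * (2 * π / n))))]
    have h := PK_sum_sin_aux n 2 two_pos (by omega)
    have : ∀ m : ℕ, (m : ℝ) * (2 * (2 * π / n)) = (m : ℝ) * ((2:ℕ) * (2 * π / n)) := by
      intro m; push_cast; ring
    simp only [this]
    exact h
  have hterm : ∀ i : Fin n, Real.sin ((i : ℕ) * (2 * π / n)) * Real.cos ((i : ℕ) * (2 * π / n))
      = Real.sin ((i : ℕ) * (2 * (2 * π / n))) / 2 := by
    intro i
    have harg : (i : ℕ) * (2 * (2 * π / n)) = 2 * ((i : ℕ) * (2 * π / n)) := by ring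
    rw [harg, Real.sin_two_mul]
    ring
  rw [Finset.sum_congr rfl fun i _ => hterm i, ← Finset.sum_div, h2]
  simp

/-! ### Index manipulation lemmas -/

lemma PK_filter_card (n : ℕ) (i : Fin n) :
    (Finset.univ.filter (fun k : Fin n => (k : ℕ) < (i : ℕ))).card = i := by
  have h : (Finset.univ.filter (fun k : Fin n => (k : ℕ) < (i : ℕ))) = Finset.Iio i := by
    ext k; simp only [Finset.mem_filter, Finset.mem_univ, true_and, Finset.mem_Iio, Fin.lt_def]
  rw [h, Fin.card_Iio]

lemma PK_filter_sum (n : ℕ) (i : Fin n) (g : ℕ → ℝ) :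
    ∑ k ∈ Finset.univ.filter (fun k : Fin n => (k : ℕ) < (i : ℕ)), g (k : ℕ)
      = ∑ k ∈ range (i : ℕ), g k := by
  rw [Finset.sum_filter, Fin.sum_univ_eq_sum_range (fun k => if k < (i : ℕ) then g k else 0),
    ← Finset.sum_filter]
  congr 1
  ext k
  simp only [Finset.mem_filter, Finset.mem_range]
  omega

lemma PK_cos_mod (n : ℕ) (hn : 0 < n) (m : ℕ) :
    Real.cos (((m % n : ℕ) : ℝ) * (2 * π / n)) = Real.cos ((m : ℝ) * (2 * π / n)) := by
  have hn' : (n : ℝ) ≠ 0 := by positivity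
  conv_rhs => rw [← Nat.mod_add_div m n]
  push_cast
  rw [add_mul]
  have h : (n : ℝ) * ((m / n : ℕ) : ℝ) * (2 * π / n) = ((m / n : ℕ) : ℤ) * (2 * π) := by
    rw [Int.cast_natCast]
    field_simp
  rw [h, Real.cos_add_int_mul_two_pi]

lemma PK_sin_mod (n : ℕ) (hn : 0 < n) (m : ℕ) :
    Real.sin (((m % n : ℕ) : ℝ) * (2 * π / n)) = Real.sin ((m : ℝ) * (2 * π / n)) := by
  have hn' : (n : ℝ) ≠ 0 := by positivity
  conv_rhs => rw [← Nat.mod_add_div m n]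
  push_cast
  rw [add_mul]
  have h : (n : ℝ) * ((m / n : ℕ) : ℝ) * (2 * π / n) = ((m / n : ℕ) : ℤ) * (2 * π) := by
    rw [Int.cast_natCast]
    field_simp
  rw [h, Real.sin_add_int_mul_two_pi]

lemma PK_succ_val (n : ℕ) (hn : 5 ≤ n) (i : Fin n) :
    haveI : NeZero n := ⟨by omega⟩
    ((i + 1 : Fin n) : ℕ) = ((i : ℕ) + 1) % n := by
  haveI : NeZero n := ⟨by omega⟩
  rw [Fin.add_def]
  simp [Fin.val_one', Nat.mod_eq_of_lt (show 1 < n by omega)]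

lemma PK_cos_succ (n : ℕ) (hn : 5 ≤ n) [NeZero n] (i : Fin n) :
    Real.cos ((((i + 1 : Fin n) : ℕ) : ℝ) * (2 * π / n))
      = Real.cos ((((i : ℕ) + 1 : ℕ) : ℝ) * (2 * π / n)) := by
  rw [PK_succ_val n hn i, PK_cos_mod n (by omega)]

lemma PK_sin_succ (n : ℕ) (hn : 5 ≤ n) [NeZero n] (i : Fin n) :
    Real.sin ((((i + 1 : Fin n) : ℕ) : ℝ) * (2 * π / n))
      = Real.sin ((((i : ℕ) + 1 : ℕ) : ℝ) * (2 * π / n)) := by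
  rw [PK_succ_val n hn i, PK_sin_mod n (by omega)]

/-! ### The explicit derivative -/

section Aux
variable (n : ℕ) [NeZero n]

noncomputable def PK_Xc (i : Fin n) : ((Fin n → ℝ) × (Fin n → ℝ) × ℝ) →L[ℝ] ℝ :=
  (ContinuousLinearMap.proj i).comp (ContinuousLinearMap.fst ℝ (Fin n → ℝ) ((Fin n → ℝ) × ℝ))

noncomputable def PK_Rc (i : Fin n) : ((Fin n → ℝ) × (Fin n → ℝ) × ℝ) →L[ℝ] ℝ :=
  (ContinuousLinearMap.proj i).comp ((ContinuousLinearMap.fst ℝ (Fin n → ℝ) ℝ).comp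
    (ContinuousLinearMap.snd ℝ (Fin n → ℝ) ((Fin n → ℝ) × ℝ)))

noncomputable def PK_Sc : ((Fin n → ℝ) × (Fin n → ℝ) × ℝ) →L[ℝ] ℝ :=
  (ContinuousLinearMap.snd ℝ (Fin n → ℝ) ℝ).comp
    (ContinuousLinearMap.snd ℝ (Fin n → ℝ) ((Fin n → ℝ) × ℝ))

set_option linter.unusedSectionVars false

@[simp] lemma PK_Xc_apply (i : Fin n) (w : (Fin n → ℝ) × (Fin n → ℝ) × ℝ) :
    PK_Xc n i w = w.1 i := rfl
@[simp] lemma PK_Rc_apply (i : Fin n) (w : (Fin n → ℝ) × (Fin n → ℝ) × ℝ) :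
    PK_Rc n i w = w.2.1 i := rfl
@[simp] lemma PK_Sc_apply (w : (Fin n → ℝ) × (Fin n → ℝ) × ℝ) :
    PK_Sc n w = w.2.2 := rfl

noncomputable def PK_Dmap : ((Fin n → ℝ) × (Fin n → ℝ) × ℝ) →L[ℝ] (ℝ × (Fin n → ℝ) × ℝ × ℝ × ℝ) :=
  (∑ i, PK_Xc n i).prod <|
  (ContinuousLinearMap.pi fun i =>
      (2 * Real.sin (2 * π / n)) • PK_Xc n i
        + ((2 : ℝ) - 2 * Real.cos (2 * π / n)) • (PK_Rc n i + PK_Rc n (i + 1)) - PK_Sc n).prod <|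
  (∑ i, (Real.cos (2 * π / n) • PK_Xc n i
      + Real.sin (2 * π / n) • (PK_Rc n i + PK_Rc n (i + 1)))).prod <|
  (∑ i : Fin n, (Real.cos ((i : ℕ) * (2 * π / n)) • PK_Rc n i
      - Real.sin ((i : ℕ) * (2 * π / n)) •
          ∑ k ∈ Finset.univ.filter (fun k : Fin n => (k : ℕ) < (i : ℕ)), PK_Xc n k)).prod
  (∑ i : Fin n, (Real.sin ((i : ℕ) * (2 * π / n)) • PK_Rc n i
      + Real.cos ((i : ℕ) * (2 * π / n)) •
          ∑ k ∈ Finset.univ.filter (fun k : Fin n => (k : ℕ) < (i : ℕ)), PK_Xc n k))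

lemma PK_Dmap_apply (w : (Fin n → ℝ) × (Fin n → ℝ) × ℝ) :
    PK_Dmap n w =
      (∑ i, w.1 i,
       fun i => 2 * Real.sin (2 * π / n) * w.1 i
         + (2 - 2 * Real.cos (2 * π / n)) * (w.2.1 i + w.2.1 (i + 1)) - w.2.2,
       ∑ i, (Real.cos (2 * π / n) * w.1 i + Real.sin (2 * π / n) * (w.2.1 i + w.2.1 (i + 1))),
       ∑ i : Fin n, (Real.cos ((i : ℕ) * (2 * π / n)) * w.2.1 i
         - Real.sin ((i : ℕ) * (2 * π / n)) *
             ∑ k ∈ Finset.univ.filter (fun k : Fin n => (k : ℕ) < (i : ℕ)), w.1 k),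
       ∑ i : Fin n, (Real.sin ((i : ℕ) * (2 * π / n)) * w.2.1 i
         + Real.cos ((i : ℕ) * (2 * π / n)) *
             ∑ k ∈ Finset.univ.filter (fun k : Fin n => (k : ℕ) < (i : ℕ)), w.1 k)) := by
  simp only [PK_Dmap, ContinuousLinearMap.prod_apply, ContinuousLinearMap.pi_apply,
    ContinuousLinearMap.sum_apply, ContinuousLinearMap.add_apply, ContinuousLinearMap.sub_apply,
    ContinuousLinearMap.smul_apply, PK_Xc_apply, PK_Rc_apply, PK_Sc_apply, smul_eq_mul]
  refine Prod.ext rfl (Prod.ext rfl (Prod.ext rfl (Prod.ext ?_ ?_))) <;> simp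

end Aux

lemma PK_theta0 (n : ℕ) [NeZero n] (i : Fin n) :
    (∑ _k ∈ Finset.univ.filter (fun k : Fin n => (k : ℕ) < (i : ℕ)), (2 * π / n : ℝ))
      = (i : ℕ) * (2 * π / n) := by
  rw [Finset.sum_const, PK_filter_card, nsmul_eq_mul]

theorem PK_hasFDerivAt (n : ℕ) [NeZero n] :
    HasFDerivAt (PsiMap n) (PK_Dmap n)
      ((fun _ => 2 * π / n, fun _ => 1, 2 * Real.sin (π / n)) :
        (Fin n → ℝ) × (Fin n → ℝ) × ℝ) := by
  set p₀ : (Fin n → ℝ) × (Fin n → ℝ) × ℝ :=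
    (fun _ => 2 * π / n, fun _ => 1, 2 * Real.sin (π / n)) with hp₀
  have hX : ∀ i : Fin n,
      HasFDerivAt (fun p : (Fin n → ℝ) × (Fin n → ℝ) × ℝ => p.1 i) (PK_Xc n i) p₀ :=
    fun i => (PK_Xc n i).hasFDerivAt
  have hR : ∀ i : Fin n,
      HasFDerivAt (fun p : (Fin n → ℝ) × (Fin n → ℝ) × ℝ => p.2.1 i) (PK_Rc n i) p₀ :=
    fun i => (PK_Rc n i).hasFDerivAt
  have hS : HasFDerivAt (fun p : (Fin n → ℝ) × (Fin n → ℝ) × ℝ => p.2.2) (PK_Sc n) p₀ :=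
    (PK_Sc n).hasFDerivAt
  have hTheta : ∀ i : Fin n, HasFDerivAt
      (fun p : (Fin n → ℝ) × (Fin n → ℝ) × ℝ =>
        ∑ k ∈ Finset.univ.filter (fun k : Fin n => (k : ℕ) < (i : ℕ)), p.1 k)
      (∑ k ∈ Finset.univ.filter (fun k : Fin n => (k : ℕ) < (i : ℕ)), PK_Xc n k) p₀ :=
    fun i => HasFDerivAt.fun_sum (fun k _ => hX k)
  show HasFDerivAt (fun p : (Fin n → ℝ) × (Fin n → ℝ) × ℝ =>
    ((∑ i, p.1 i - 2 * π : ℝ),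
     (fun i => p.2.1 i ^ 2 + p.2.1 (i + 1) ^ 2
        - 2 * p.2.1 i * p.2.1 (i + 1) * Real.cos (p.1 i) - p.2.2 : Fin n → ℝ),
     (∑ i, p.2.1 i * p.2.1 (i + 1) * Real.sin (p.1 i) - n * Real.sin (2 * π / n) : ℝ),
     (∑ i, p.2.1 i
        * Real.cos (∑ k ∈ Finset.univ.filter (fun k : Fin n => (k : ℕ) < (i : ℕ)), p.1 k) : ℝ),
     (∑ i, p.2.1 i
        * Real.sin (∑ k ∈ Finset.univ.filter (fun k : Fin n => (k : ℕ) < (i : ℕ)), p.1 k) : ℝ)))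
    (PK_Dmap n) p₀
  unfold PK_Dmap
  apply HasFDerivAt.prodMk
  on_goal 2 => apply HasFDerivAt.prodMk
  on_goal 3 => apply HasFDerivAt.prodMk
  on_goal 4 => apply HasFDerivAt.prodMk
  · exact (HasFDerivAt.fun_sum (fun i _ => hX i)).sub_const _
  · apply hasFDerivAt_pi.2
    intro i
    have h1 : HasFDerivAt (fun p : (Fin n → ℝ) × (Fin n → ℝ) × ℝ => p.2.1 i ^ 2)
        ((p₀.2.1 i) • PK_Rc n i + (p₀.2.1 i) • PK_Rc n i) p₀ := by
      simpa [pow_two] using (hR i).fun_mul (hR i)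
    have h2 : HasFDerivAt (fun p : (Fin n → ℝ) × (Fin n → ℝ) × ℝ => p.2.1 (i+1) ^ 2)
        ((p₀.2.1 (i+1)) • PK_Rc n (i+1) + (p₀.2.1 (i+1)) • PK_Rc n (i+1)) p₀ := by
      simpa [pow_two] using (hR (i+1)).fun_mul (hR (i+1))
    have h3 := ((h1.add h2).sub
      ((((hR i).const_mul 2).fun_mul (hR (i+1))).fun_mul ((hX i).cos))).sub hS
    refine h3.congr_fderiv ?_
    refine ContinuousLinearMap.ext fun w => ?_
    simp only [ContinuousLinearMap.add_apply, ContinuousLinearMap.sub_apply,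
      ContinuousLinearMap.smul_apply, PK_Xc_apply, PK_Rc_apply, PK_Sc_apply, smul_eq_mul, hp₀]
    ring
  · have h3 := (HasFDerivAt.fun_sum (u := Finset.univ) (fun (i : Fin n) _ =>
      ((hR i).fun_mul (hR (i+1))).fun_mul ((hX i).sin))).sub_const ((n : ℝ) * Real.sin (2 * π / n))
    refine h3.congr_fderiv ?_
    refine ContinuousLinearMap.ext fun w => ?_
    simp only [ContinuousLinearMap.sum_apply, ContinuousLinearMap.add_apply,
      ContinuousLinearMap.smul_apply, PK_Xc_apply, PK_Rc_apply, smul_eq_mul, hp₀]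
    refine Finset.sum_congr rfl fun i _ => ?_
    ring
  · have h3 := HasFDerivAt.fun_sum (u := Finset.univ) (fun (i : Fin n) _ =>
      (hR i).fun_mul ((hTheta i).cos))
    refine h3.congr_fderiv ?_
    refine ContinuousLinearMap.ext fun w => ?_
    simp only [ContinuousLinearMap.sum_apply, ContinuousLinearMap.add_apply,
      ContinuousLinearMap.sub_apply, ContinuousLinearMap.smul_apply,
      ContinuousLinearMap.neg_apply, PK_Xc_apply, PK_Rc_apply, smul_eq_mul, hp₀,
      PK_theta0, neg_smul]
    refine Finset.sum_congr rfl fun i _ => ?_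
    ring
  · have h3 := HasFDerivAt.fun_sum (u := Finset.univ) (fun (i : Fin n) _ =>
      (hR i).fun_mul ((hTheta i).sin))
    refine h3.congr_fderiv ?_
    refine ContinuousLinearMap.ext fun w => ?_
    simp only [ContinuousLinearMap.sum_apply, ContinuousLinearMap.add_apply,
      ContinuousLinearMap.sub_apply, ContinuousLinearMap.smul_apply,
      ContinuousLinearMap.neg_apply, PK_Xc_apply, PK_Rc_apply, smul_eq_mul, hp₀,
      PK_theta0, neg_smul]
    refine Finset.sum_congr rfl fun i _ => ?_
    ring

lemma PK_sum_shift (n : ℕ) [NeZero n] (v : Fin n → ℝ) :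
    ∑ i : Fin n, v (i + 1) = ∑ i, v i := by
  have h := Equiv.sum_comp (Equiv.addRight (1 : Fin n)) v
  simpa [Equiv.coe_addRight] using h

theorem PsiMap_kernel_dim (n : ℕ) [NeZero n] (hn : 5 ≤ n) :
    Module.finrank ℝ
        (LinearMap.ker
          (fderiv ℝ (PsiMap n)
            ((fun _ => 2 * π / n, fun _ => 1, 2 * Real.sin (π / n)) :
              (Fin n → ℝ) × (Fin n → ℝ) × ℝ)).toLinearMap)
      = n - 3 := by
  rw [(PK_hasFDerivAt n).fderiv]
  have hpi := Real.pi_pos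
  have hnR : (0:ℝ) < n := by exact_mod_cast (show 0 < n by omega)
  have hnR' : (n:ℝ) ≠ 0 := hnR.ne'
  have hapos : (0:ℝ) < 2 * π / n := by positivity
  have haltpi : 2 * π / (n:ℝ) < π := by
    rw [div_lt_iff₀ hnR]
    have h5 : (5:ℝ) ≤ n := by exact_mod_cast hn
    nlinarith
  have hsina : 0 < Real.sin (2 * π / n) := Real.sin_pos_of_pos_of_lt_pi hapos haltpi
  have hna : (n:ℝ) * (2 * π / n) = 2 * π := by field_simp
  have hc1 := PK_sum_cos n hn
  have hs1 := PK_sum_sin n hn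
  have hc2 := PK_sum_cos_sq n hn
  have hs2 := PK_sum_sin_sq n hn
  have hsc := PK_sum_sin_cos n hn
  set S := LinearMap.range (PK_Dmap n).toLinearMap with hS
  have hmem : ∀ w : (Fin n → ℝ) × (Fin n → ℝ) × ℝ, PK_Dmap n w ∈ S :=
    fun w => LinearMap.mem_range_self _ w
  -- ### the vector e₄
  have he4 : ((0:ℝ), (0 : Fin n → ℝ), (0:ℝ), (1:ℝ), (0:ℝ)) ∈ S := by
    set u4 : Fin n → ℝ := fun i =>
      Real.sin ((((i:ℕ) + 1 : ℕ) : ℝ) * (2 * π / n)) - Real.sin (((i:ℕ) : ℝ) * (2 * π / n))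
      with hu4def
    set v4 : Fin n → ℝ := fun i => -Real.cos (((i:ℕ) : ℝ) * (2 * π / n)) with hv4def
    have hu4 : ∑ i : Fin n, u4 i = 0 := by
      rw [hu4def, Fin.sum_univ_eq_sum_range
        (fun m : ℕ => Real.sin (((m + 1 : ℕ) : ℝ) * (2 * π / n))
          - Real.sin ((m : ℝ) * (2 * π / n)))]
      rw [Finset.sum_range_sub (fun m : ℕ => Real.sin ((m : ℝ) * (2 * π / n)))]
      rw [hna]
      simp
    have hv4 : ∑ i : Fin n, v4 i = 0 := by
      rw [hv4def]
      rw [Finset.sum_neg_distrib, hc1, neg_zero]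
    have hP4 : ∀ i : Fin n,
        (∑ k ∈ Finset.univ.filter (fun k : Fin n => (k : ℕ) < (i : ℕ)), u4 k)
          = Real.sin (((i:ℕ) : ℝ) * (2 * π / n)) := by
      intro i
      rw [hu4def]
      rw [PK_filter_sum n i (fun m : ℕ => Real.sin (((m + 1 : ℕ) : ℝ) * (2 * π / n))
          - Real.sin ((m : ℝ) * (2 * π / n)))]
      rw [Finset.sum_range_sub (fun m : ℕ => Real.sin ((m : ℝ) * (2 * π / n)))]
      simp
    have hV4 : PK_Dmap n (u4, v4, (0:ℝ))
        = ((0:ℝ), (0 : Fin n → ℝ), (0:ℝ), (-(n:ℝ)), (0:ℝ)) := by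
      rw [PK_Dmap_apply]
      refine Prod.ext ?_ (Prod.ext ?_ (Prod.ext ?_ (Prod.ext ?_ ?_)))
      · exact hu4
      · funext i
        simp only [Pi.zero_apply]
        rw [hv4def, hu4def]
        simp only
        rw [PK_cos_succ n hn i]
        push_cast
        have harg : (((i:ℕ) : ℝ) + 1) * (2 * π / n) = ((i:ℕ) : ℝ) * (2 * π / n) + 2 * π / n := by
          ring
        rw [harg, Real.sin_add, Real.cos_add]
        linear_combination (2 * Real.cos (((i:ℕ) : ℝ) * (2 * π / n)))
          * Real.sin_sq_add_cos_sq (2 * π / n)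
      · simp only
        rw [Finset.sum_add_distrib, ← Finset.mul_sum, ← Finset.mul_sum, hu4]
        rw [Finset.sum_add_distrib, PK_sum_shift, hv4]
        ring
      · simp only
        have hterm : ∀ i : Fin n,
            Real.cos (((i:ℕ) : ℝ) * (2 * π / n)) * v4 i
              - Real.sin (((i:ℕ) : ℝ) * (2 * π / n))
                * (∑ k ∈ Finset.univ.filter (fun k : Fin n => (k : ℕ) < (i : ℕ)), u4 k)
            = -(Real.cos (((i:ℕ) : ℝ) * (2 * π / n)) ^ 2)
              - Real.sin (((i:ℕ) : ℝ) * (2 * π / n)) ^ 2 := by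
          intro i
          rw [hP4 i, hv4def]
          ring
        rw [Finset.sum_congr rfl fun i _ => hterm i, Finset.sum_sub_distrib,
          Finset.sum_neg_distrib, hc2, hs2]
        ring
      · simp only
        have hterm : ∀ i : Fin n,
            Real.sin (((i:ℕ) : ℝ) * (2 * π / n)) * v4 i
              + Real.cos (((i:ℕ) : ℝ) * (2 * π / n))
                * (∑ k ∈ Finset.univ.filter (fun k : Fin n => (k : ℕ) < (i : ℕ)), u4 k)
            = 0 := by
          intro i
          rw [hP4 i, hv4def]
          ring
        rw [Finset.sum_congr rfl fun i _ => hterm i]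
        simp
    have h := Submodule.smul_mem S (-(n:ℝ))⁻¹ (hmem (u4, v4, 0))
    rw [hV4] at h
    have heq : ((0:ℝ), (0 : Fin n → ℝ), (0:ℝ), (1:ℝ), (0:ℝ))
        = (-(n:ℝ))⁻¹ • ((0:ℝ), (0 : Fin n → ℝ), (0:ℝ), (-(n:ℝ)), (0:ℝ)) := by
      refine Prod.ext ?_ (Prod.ext ?_ (Prod.ext ?_ (Prod.ext ?_ ?_))) <;>
        simp [Prod.smul_mk, smul_eq_mul] <;> field_simp
    rw [heq]
    exact h
  -- ### the vector e₅
  have he5 : ((0:ℝ), (0 : Fin n → ℝ), (0:ℝ), (0:ℝ), (1:ℝ)) ∈ S := by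
    set u5 : Fin n → ℝ := fun i =>
      Real.cos ((((i:ℕ) + 1 : ℕ) : ℝ) * (2 * π / n)) - Real.cos (((i:ℕ) : ℝ) * (2 * π / n))
      with hu5def
    set v5 : Fin n → ℝ := fun i => Real.sin (((i:ℕ) : ℝ) * (2 * π / n)) with hv5def
    have hu5 : ∑ i : Fin n, u5 i = 0 := by
      rw [hu5def, Fin.sum_univ_eq_sum_range
        (fun m : ℕ => Real.cos (((m + 1 : ℕ) : ℝ) * (2 * π / n))
          - Real.cos ((m : ℝ) * (2 * π / n)))]
      rw [Finset.sum_range_sub (fun m : ℕ => Real.cos ((m : ℝ) * (2 * π / n)))]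
      rw [hna]
      simp
    have hv5 : ∑ i : Fin n, v5 i = 0 := by rw [hv5def]; exact hs1
    have hP5 : ∀ i : Fin n,
        (∑ k ∈ Finset.univ.filter (fun k : Fin n => (k : ℕ) < (i : ℕ)), u5 k)
          = Real.cos (((i:ℕ) : ℝ) * (2 * π / n)) - 1 := by
      intro i
      rw [hu5def]
      rw [PK_filter_sum n i (fun m : ℕ => Real.cos (((m + 1 : ℕ) : ℝ) * (2 * π / n))
          - Real.cos ((m : ℝ) * (2 * π / n)))]
      rw [Finset.sum_range_sub (fun m : ℕ => Real.cos ((m : ℝ) * (2 * π / n)))]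
      simp
    have hV5 : PK_Dmap n (u5, v5, (0:ℝ))
        = ((0:ℝ), (0 : Fin n → ℝ), (0:ℝ), (0:ℝ), ((n:ℝ))) := by
      rw [PK_Dmap_apply]
      refine Prod.ext ?_ (Prod.ext ?_ (Prod.ext ?_ (Prod.ext ?_ ?_)))
      · exact hu5
      · funext i
        simp only [Pi.zero_apply]
        rw [hv5def, hu5def]
        simp only
        rw [PK_sin_succ n hn i]
        push_cast
        have harg : (((i:ℕ) : ℝ) + 1) * (2 * π / n) = ((i:ℕ) : ℝ) * (2 * π / n) + 2 * π / n := by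
          ring
        rw [harg, Real.sin_add, Real.cos_add]
        linear_combination (-2 * Real.sin (((i:ℕ) : ℝ) * (2 * π / n)))
          * Real.sin_sq_add_cos_sq (2 * π / n)
      · simp only
        rw [Finset.sum_add_distrib, ← Finset.mul_sum, ← Finset.mul_sum, hu5]
        rw [Finset.sum_add_distrib, PK_sum_shift, hv5]
        ring
      · simp only
        have hterm : ∀ i : Fin n,
            Real.cos (((i:ℕ) : ℝ) * (2 * π / n)) * v5 i
              - Real.sin (((i:ℕ) : ℝ) * (2 * π / n))
                * (∑ k ∈ Finset.univ.filter (fun k : Fin n => (k : ℕ) < (i : ℕ)), u5 k)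
            = Real.sin (((i:ℕ) : ℝ) * (2 * π / n)) := by
          intro i
          rw [hP5 i, hv5def]
          ring
        rw [Finset.sum_congr rfl fun i _ => hterm i, hs1]
      · simp only
        have hterm : ∀ i : Fin n,
            Real.sin (((i:ℕ) : ℝ) * (2 * π / n)) * v5 i
              + Real.cos (((i:ℕ) : ℝ) * (2 * π / n))
                * (∑ k ∈ Finset.univ.filter (fun k : Fin n => (k : ℕ) < (i : ℕ)), u5 k)
            = (Real.sin (((i:ℕ) : ℝ) * (2 * π / n)) ^ 2
                + Real.cos (((i:ℕ) : ℝ) * (2 * π / n)) ^ 2)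
              - Real.cos (((i:ℕ) : ℝ) * (2 * π / n)) := by
          intro i
          rw [hP5 i, hv5def]
          ring
        rw [Finset.sum_congr rfl fun i _ => hterm i, Finset.sum_sub_distrib,
          Finset.sum_add_distrib, hs2, hc2, hc1]
        ring
    have h := Submodule.smul_mem S ((n:ℝ))⁻¹ (hmem (u5, v5, 0))
    rw [hV5] at h
    have heq : ((0:ℝ), (0 : Fin n → ℝ), (0:ℝ), (0:ℝ), (1:ℝ))
        = ((n:ℝ))⁻¹ • ((0:ℝ), (0 : Fin n → ℝ), (0:ℝ), (0:ℝ), ((n:ℝ))) := by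
      refine Prod.ext ?_ (Prod.ext ?_ (Prod.ext ?_ (Prod.ext ?_ ?_))) <;>
        simp [Prod.smul_mk, smul_eq_mul] <;> field_simp
    rw [heq]
    exact h
  -- ### the vector e₃
  have he3 : ((0:ℝ), (0 : Fin n → ℝ), (1:ℝ), (0:ℝ), (0:ℝ)) ∈ S := by
    have hV3 : PK_Dmap n ((0 : Fin n → ℝ), (fun _ => (1:ℝ)), (4 - 4 * Real.cos (2 * π / n)))
        = ((0:ℝ), (0 : Fin n → ℝ), ((n:ℝ) * (2 * Real.sin (2 * π / n))), (0:ℝ), (0:ℝ)) := by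
      rw [PK_Dmap_apply]
      refine Prod.ext ?_ (Prod.ext ?_ (Prod.ext ?_ (Prod.ext ?_ ?_)))
      · simp
      · funext i
        simp only [Pi.zero_apply]
        ring
      · simp only [Pi.zero_apply, mul_zero, zero_add]
        rw [Finset.sum_const, Finset.card_univ, Fintype.card_fin, nsmul_eq_mul]
        ring
      · simpa using hc1
      · simpa using hs1
    have h := Submodule.smul_mem S ((n:ℝ) * (2 * Real.sin (2 * π / n)))⁻¹
      (hmem ((0 : Fin n → ℝ), (fun _ => (1:ℝ)), (4 - 4 * Real.cos (2 * π / n))))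
    rw [hV3] at h
    have heq : ((0:ℝ), (0 : Fin n → ℝ), (1:ℝ), (0:ℝ), (0:ℝ))
        = ((n:ℝ) * (2 * Real.sin (2 * π / n)))⁻¹
            • ((0:ℝ), (0 : Fin n → ℝ), ((n:ℝ) * (2 * Real.sin (2 * π / n))), (0:ℝ), (0:ℝ)) := by
      refine Prod.ext ?_ (Prod.ext ?_ (Prod.ext ?_ (Prod.ext ?_ ?_))) <;>
        simp [Prod.smul_mk, smul_eq_mul] <;> field_simp <;> ring
    rw [heq]
    exact h
  -- ### the vector e₁
  have he1 : ((1:ℝ), (0 : Fin n → ℝ), (0:ℝ), (0:ℝ), (0:ℝ)) ∈ S := by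
    set W1 := PK_Dmap n ((fun _ => (1:ℝ)), (0 : Fin n → ℝ), 2 * Real.sin (2 * π / n)) with hW1def
    have hW11 : W1.1 = n := by
      rw [hW1def, PK_Dmap_apply]
      simp
    have hW12 : W1.2.1 = 0 := by
      rw [hW1def, PK_Dmap_apply]
      funext i
      simp only [Pi.zero_apply]
      ring
    have hW13 : W1.2.2.1 = (n:ℝ) * Real.cos (2 * π / n) := by
      rw [hW1def, PK_Dmap_apply]
      simp only [Pi.zero_apply, mul_one, mul_zero, add_zero, zero_add]
      rw [Finset.sum_const, Finset.card_univ, Fintype.card_fin, nsmul_eq_mul]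
    have heq : ((1:ℝ), (0 : Fin n → ℝ), (0:ℝ), (0:ℝ), (0:ℝ))
        = (n:ℝ)⁻¹ • (W1
            - ((n:ℝ) * Real.cos (2 * π / n)) • ((0:ℝ), (0 : Fin n → ℝ), (1:ℝ), (0:ℝ), (0:ℝ))
            - W1.2.2.2.1 • ((0:ℝ), (0 : Fin n → ℝ), (0:ℝ), (1:ℝ), (0:ℝ))
            - W1.2.2.2.2 • ((0:ℝ), (0 : Fin n → ℝ), (0:ℝ), (0:ℝ), (1:ℝ))) := by
      refine Prod.ext ?_ (Prod.ext ?_ (Prod.ext ?_ (Prod.ext ?_ ?_))) <;>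
        simp [Prod.smul_mk, smul_eq_mul, Prod.fst_sub, Prod.snd_sub, Prod.smul_fst,
          Prod.smul_snd, hW11, hW12, hW13] <;> field_simp
    rw [heq]
    exact Submodule.smul_mem S _ (Submodule.sub_mem S (Submodule.sub_mem S (Submodule.sub_mem S
      (hmem _) (Submodule.smul_mem S _ he3)) (Submodule.smul_mem S _ he4))
      (Submodule.smul_mem S _ he5))
  -- ### the vectors e_j in the middle slot
  have hej : ∀ j : Fin n, (((0:ℝ), Pi.single j (1:ℝ), (0:ℝ), (0:ℝ), (0:ℝ)) : ℝ × (Fin n → ℝ) × ℝ × ℝ × ℝ) ∈ S := by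
    intro j
    set Wj := PK_Dmap n (Pi.single j (1:ℝ), (0 : Fin n → ℝ), (0:ℝ)) with hWjdef
    have hWj1 : Wj.1 = 1 := by
      rw [hWjdef, PK_Dmap_apply]
      simp [Finset.sum_pi_single']
    have hWj2 : Wj.2.1 = fun i => 2 * Real.sin (2 * π / n) * (Pi.single j (1:ℝ) : Fin n → ℝ) i := by
      rw [hWjdef, PK_Dmap_apply]
      funext i
      simp only [Pi.zero_apply]
      ring
    have hWj3 : Wj.2.2.1 = Real.cos (2 * π / n) := by
      rw [hWjdef, PK_Dmap_apply]
      simp only [Pi.zero_apply, add_zero, mul_zero, zero_add]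
      rw [← Finset.mul_sum]
      simp [Finset.sum_pi_single']
    have heq : (((0:ℝ), Pi.single j (1:ℝ), (0:ℝ), (0:ℝ), (0:ℝ)) : ℝ × (Fin n → ℝ) × ℝ × ℝ × ℝ)
        = (2 * Real.sin (2 * π / n))⁻¹ • (Wj
            - (1:ℝ) • ((1:ℝ), (0 : Fin n → ℝ), (0:ℝ), (0:ℝ), (0:ℝ))
            - (Real.cos (2 * π / n)) • ((0:ℝ), (0 : Fin n → ℝ), (1:ℝ), (0:ℝ), (0:ℝ))
            - Wj.2.2.2.1 • ((0:ℝ), (0 : Fin n → ℝ), (0:ℝ), (1:ℝ), (0:ℝ))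
            - Wj.2.2.2.2 • ((0:ℝ), (0 : Fin n → ℝ), (0:ℝ), (0:ℝ), (1:ℝ))) := by
      refine Prod.ext ?_ (Prod.ext ?_ (Prod.ext ?_ (Prod.ext ?_ ?_))) <;>
        simp [Prod.smul_mk, smul_eq_mul, Prod.fst_sub, Prod.snd_sub, Prod.smul_fst,
          Prod.smul_snd, hWj1, hWj2, hWj3]
      · funext i
        simp only [Pi.smul_apply, Pi.sub_apply, Pi.zero_apply, smul_eq_mul]
        field_simp
    rw [heq]
    exact Submodule.smul_mem S _ (Submodule.sub_mem S (Submodule.sub_mem S (Submodule.sub_mem S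
      (Submodule.sub_mem S (hmem _) (Submodule.smul_mem S _ he1))
      (Submodule.smul_mem S _ he3)) (Submodule.smul_mem S _ he4))
      (Submodule.smul_mem S _ he5))
  -- ### surjectivity
  have hrange : S = ⊤ := by
    rw [eq_top_iff]
    rintro ⟨α, w, β, γ, δ⟩ -
    have hw : ∑ j : Fin n, w j • (Pi.single j (1:ℝ) : Fin n → ℝ) = w := by
      have h1 : ∀ j : Fin n, w j • (Pi.single j (1:ℝ) : Fin n → ℝ)
          = (Pi.single j (w j) : Fin n → ℝ) := by
        intro j
        rw [← Pi.single_smul]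
        simp
      rw [Finset.sum_congr rfl fun j _ => h1 j, Finset.univ_sum_single]
    have hd : ((α, w, β, γ, δ) : ℝ × (Fin n → ℝ) × ℝ × ℝ × ℝ)
        = α • ((1:ℝ), (0 : Fin n → ℝ), (0:ℝ), (0:ℝ), (0:ℝ))
          + β • ((0:ℝ), (0 : Fin n → ℝ), (1:ℝ), (0:ℝ), (0:ℝ))
          + γ • ((0:ℝ), (0 : Fin n → ℝ), (0:ℝ), (1:ℝ), (0:ℝ))
          + δ • ((0:ℝ), (0 : Fin n → ℝ), (0:ℝ), (0:ℝ), (1:ℝ))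
          + ∑ j : Fin n, w j • (((0:ℝ), Pi.single j (1:ℝ), (0:ℝ), (0:ℝ), (0:ℝ)) :
              ℝ × (Fin n → ℝ) × ℝ × ℝ × ℝ) := by
      refine Prod.ext ?_ (Prod.ext ?_ (Prod.ext ?_ (Prod.ext ?_ ?_))) <;>
        simp [Prod.smul_mk, smul_eq_mul, Prod.fst_sum, Prod.snd_sum, hw]
    rw [hd]
    exact Submodule.add_mem _ (Submodule.add_mem _ (Submodule.add_mem _ (Submodule.add_mem _
      (Submodule.smul_mem _ _ he1) (Submodule.smul_mem _ _ he3))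
      (Submodule.smul_mem _ _ he4)) (Submodule.smul_mem _ _ he5))
      (Submodule.sum_mem _ fun j _ => Submodule.smul_mem _ _ (hej j))
  -- ### rank-nullity
  have hrank := LinearMap.finrank_range_add_finrank_ker (PK_Dmap n).toLinearMap
  rw [← hS, hrange, finrank_top] at hrank
  have hcod : Module.finrank ℝ (ℝ × (Fin n → ℝ) × ℝ × ℝ × ℝ) = n + 4 := by
    simp [Module.finrank_prod, Module.finrank_pi, Module.finrank_self]
    omega
  have hdom : Module.finrank ℝ ((Fin n → ℝ) × (Fin n → ℝ) × ℝ) = 2 * n + 1 := by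
    simp [Module.finrank_prod, Module.finrank_pi, Module.finrank_self]
    omega
  rw [hcod, hdom] at hrank
  omega
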